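/- Let G be a finite simple graph with no isolatable vertex. Suppose further that any two maximal independent sets of G of different cardinalities have nonempty intersection. Then G is well-covered. -/

import Mathlib

/-
Suppose `A`, `B` are maximal independent sets with `|A| < |B|`, chosen with `|A ∩ B|` minimal;
by hypothesis they share a vertex `x`. Since `x` is not isolatable, some `y ≠ x` lies outside
`N[B \ {x}]`; maximality of `B` forces `y ~ x`, so `(B \ {x}) ∪ {y}` is independent and extends
to a maximal independent set `B'` with `|B'| ≥ |B|`. Every vertex of `A ∩ B'` already lies in
`B` (a vertex outside `B` has a neighbour in `B`, which is neither `x` nor in `B'`), and `x ∉ B'`,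
so `|A ∩ B'| < |A ∩ B|`, contradicting minimality.
-/

/-- A set of vertices is independent if no two of its vertices are adjacent. -/
def IsIndep {V : Type*} (G : SimpleGraph V) (s : Set V) : Prop :=
  ∀ ⦃u⦄, u ∈ s → ∀ ⦃v⦄, v ∈ s → ¬ G.Adj u v

/-- A maximal independent set: independent and contained in no strictly larger
independent set. -/
def MaxIndep {V : Type*} (G : SimpleGraph V) (s : Set V) : Prop :=
  IsIndep G s ∧ ∀ t : Set V, IsIndep G t → s ⊆ t → s = t

/-- A maximal independent set of the subgraph induced on `A`. -/
def MaxIndepOn {V : Type*} (G : SimpleGraph V) (A : Set V) (s : Set V) : Prop :=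
  s ⊆ A ∧ IsIndep G s ∧ ∀ t : Set V, t ⊆ A → IsIndep G t → s ⊆ t → s = t

/-- A graph is well-covered if every maximal independent set has the same cardinality. -/
def WellCovered {V : Type*} (G : SimpleGraph V) : Prop :=
  ∀ s t : Set V, MaxIndep G s → MaxIndep G t → s.ncard = t.ncard

/-- The closed neighborhood `N[S]`: the union of `S` with the set of all vertices
adjacent to some vertex of `S`. -/
def ClosedNbhd {V : Type*} (G : SimpleGraph V) (S : Set V) : Set V :=
  S ∪ {v | ∃ u ∈ S, G.Adj u v}

/-- A vertex `x` is isolatable if there is an independent set `M` such that `x` is the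
unique vertex lying outside `N[M]`. -/
def Isolatable {V : Type*} (G : SimpleGraph V) (x : V) : Prop :=
  ∃ M : Set V, IsIndep G M ∧ (ClosedNbhd G M)ᶜ = {x}

section

variable {V : Type*} {G : SimpleGraph V} {s B : Set V} {x : V}

lemma IsIndep.insert {y : V} (hs : IsIndep G s) (hy : ∀ u ∈ s, ¬ G.Adj u y) :
    IsIndep G (insert y s) := by
  rintro u (rfl | hu) v (rfl | hv) huv
  · exact G.irrefl huv
  · exact hy v hv huv.symm
  · exact hy u hu huv
  · exact hs hu hv huv

lemma IsIndep.mono {t : Set V} (ht : IsIndep G t) (hst : s ⊆ t) : IsIndep G s :=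
  fun _ hu _ hv => ht (hst hu) (hst hv)

lemma maxIndep_iff_maximal : MaxIndep G s ↔ Maximal (IsIndep G) s :=
  and_congr_right fun _ =>
    ⟨fun h _ ht hst => (h _ ht hst).ge, fun h _ ht hst => hst.antisymm (h ht hst)⟩

lemma IsIndep.exists_maxIndep_superset [Finite V] (hs : IsIndep G s) :
    ∃ t, s ⊆ t ∧ MaxIndep G t := by
  simpa only [maxIndep_iff_maximal] using Finite.exists_le_maximal hs

lemma MaxIndep.exists_adj_of_notMem (hB : MaxIndep G B) (hz : x ∉ B) : ∃ u ∈ B, G.Adj u x := by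
  by_contra! h
  exact hz <| (hB.2 _ (hB.1.insert h) (Set.subset_insert x B)) ▸ Set.mem_insert x B

lemma MaxIndep.exists_adj_insert_diff_isIndep (hx : ¬ Isolatable G x) (hB : MaxIndep G B)
    (hxB : x ∈ B) : ∃ y ∉ B, G.Adj x y ∧ IsIndep G (insert y (B \ {x})) := by
  have hBx : IsIndep G (B \ {x}) := hB.1.mono Set.sdiff_subset
  have hx_out : x ∈ (ClosedNbhd G (B \ {x}))ᶜ := by
    rintro (hx' | ⟨u, hu, hux⟩)
    · exact hx'.2 rfl
    · exact hB.1 hu.1 hxB hux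
  obtain ⟨y, hy_out, hyx⟩ : ∃ y ∈ (ClosedNbhd G (B \ {x}))ᶜ, y ≠ x := by
    by_contra! h
    exact hx ⟨B \ {x}, hBx, Set.eq_singleton_iff_unique_mem.2 ⟨hx_out, h⟩⟩
  simp only [ClosedNbhd, Set.compl_union, Set.mem_inter_iff, Set.mem_compl_iff,
    Set.mem_ofPred_eq, not_exists, not_and] at hy_out
  obtain ⟨hy_notMem, hy_nadj⟩ := hy_out
  have hyB : y ∉ B := fun hy => hy_notMem ⟨hy, hyx⟩
  obtain ⟨u, hu, huy⟩ := hB.exists_adj_of_notMem hyB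
  obtain rfl : u = x := by_contra fun hux => hy_nadj u ⟨hu, hux⟩ huy
  exact ⟨y, hyB, huy, hBx.insert hy_nadj⟩

lemma MaxIndep.inter_subset_diff_of_diff_subset {A B' : Set V} (hA : MaxIndep G A)
    (hB : MaxIndep G B) (hB' : MaxIndep G B') (hxA : x ∈ A) (hBB' : B \ {x} ⊆ B')
    (hxB' : x ∉ B') : A ∩ B' ⊆ (A ∩ B) \ {x} := by
  rintro z ⟨hzA, hzB'⟩
  refine ⟨⟨hzA, by_contra fun hzB => ?_⟩, fun hzx => hxB' (hzx ▸ hzB')⟩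
  obtain ⟨u, hu, huz⟩ := hB.exists_adj_of_notMem hzB
  obtain rfl | hux := eq_or_ne u x
  · exact hA.1 hxA hzA huz
  · exact hB'.1 (hBB' ⟨hu, hux⟩) hzB' huz

lemma MaxIndep.exists_inter_ncard_lt [Finite V] (hno : ∀ x : V, ¬ Isolatable G x)
    {A : Set V} (hA : MaxIndep G A) (hB : MaxIndep G B) (hAB : (A ∩ B).Nonempty) :
    ∃ B', MaxIndep G B' ∧ B.ncard ≤ B'.ncard ∧ (A ∩ B').ncard < (A ∩ B).ncard := by
  obtain ⟨x, hxA, hxB⟩ := hAB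
  obtain ⟨y, hyB, hxy, hT⟩ := hB.exists_adj_insert_diff_isIndep (hno x) hxB
  obtain ⟨B', hTB', hB'⟩ := hT.exists_maxIndep_superset
  have hxB' : x ∉ B' := fun hx => hB'.1 hx (hTB' (Set.mem_insert y _)) hxy
  refine ⟨B', hB', ?_, ?_⟩
  · calc B.ncard = (insert y (B \ {x})).ncard := (Set.ncard_exchange hyB hxB).symm
      _ ≤ B'.ncard := Set.ncard_le_ncard hTB'
  · have hBB' : B \ {x} ⊆ B' := (Set.subset_insert y _).trans hTB'
    calc (A ∩ B').ncard ≤ ((A ∩ B) \ {x}).ncard :=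
          Set.ncard_le_ncard (hA.inter_subset_diff_of_diff_subset hB hB' hxA hBB' hxB')
      _ < (A ∩ B).ncard := Set.ncard_sdiff_singleton_lt_of_mem ⟨hxA, hxB⟩

end

/-- If `G` has no isolatable vertex and any two maximal independent sets of different
cardinalities intersect, then `G` is well-covered. -/
theorem stmt_6 {V : Type*} [Fintype V] (G : SimpleGraph V)
    (hno : ∀ x : V, ¬ Isolatable G x)
    (hint : ∀ M N : Set V, MaxIndep G M → MaxIndep G N → M.ncard ≠ N.ncard →
      (M ∩ N).Nonempty) :
    WellCovered G := by
  have key : ∀ A B, MaxIndep G A → MaxIndep G B → ¬ A.ncard < B.ncard := by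
    intro A B hA hB hlt
    induction hn : (A ∩ B).ncard using Nat.strong_induction_on generalizing B with
    | _ n ih =>
      obtain ⟨B', hB', hle, hdec⟩ := hA.exists_inter_ncard_lt hno hB (hint A B hA hB hlt.ne)
      exact ih _ (hn ▸ hdec) B' hB' (hlt.trans_le hle) rfl
  intro s t hs ht
  exact le_antisymm (not_lt.1 (key t s ht hs)) (not_lt.1 (key s t hs ht))
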